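/- (1/(24π²)) ∫₀^{2π} ∫₀^{2π} log(10 − 8cos x − 2cos y) dx dy = (1/(6π)) ∫₀^{π} log(5 − cos x + √(cos²x − 10cos x + 9)) dx. -/

import Mathlib

/-!
Writing `a - b cos x = ((a + s) / 2) (1 - 2ρ cos x + ρ²)` with `s = √(a² - b²)` and
`ρ = b / (a + s)`, the second factor is `|e^{ix} - ρ|²` with `|ρ| < 1`, whose logarithm has mean
zero over the circle (`log |z - ρ|` is harmonic inside the disc). Hence
`∫₀^{2π} log (a - b cos x) dx = 2π log ((a + √(a² - b²)) / 2)` for `|b| < a`; with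
`a = 10 - 2 cos y` and `b = 8` this evaluates the inner integral whenever `cos y ≠ 1`, i.e. for
almost every `y`.
The remaining integrand depends on `y` only through `cos y`, so its integral over `[0, 2π]` is
twice that over `[0, π]`.
-/

open Real MeasureTheory

theorem integral_log_one_sub_two_mul_cos_add_sq {ρ : ℝ} (hρ : |ρ| ≤ 1) :
    ∫ x in (0:ℝ)..2 * π, log (1 - 2 * ρ * cos x + ρ ^ 2) = 0 := by
  have hnorm (x : ℝ) : 1 - 2 * ρ * cos x + ρ ^ 2 = ‖circleMap 0 1 x - ρ‖ ^ 2 := by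
    rw [Complex.sq_norm, Complex.normSq_apply]
    simp only [circleMap_zero, Complex.sub_re, Complex.sub_im, Complex.exp_ofReal_mul_I_re,
      Complex.exp_ofReal_mul_I_im, Complex.ofReal_re, Complex.ofReal_im, Complex.ofReal_one,
      one_mul]
    linear_combination -sin_sq_add_cos_sq x
  have havg := circleAverage_log_norm_sub_const_of_mem_closedBall (c := 0) (R := 1)
    (a := (ρ : ℂ)) (by simpa using hρ)
  rw [log_one, circleAverage_def, smul_eq_mul, mul_eq_zero] at havg
  simp only [hnorm, log_pow, Nat.cast_ofNat, intervalIntegral.integral_const_mul,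
    havg.resolve_left (by positivity), mul_zero]

theorem one_sub_two_mul_cos_add_sq_pos {ρ : ℝ} (hρ : |ρ| < 1) (x : ℝ) :
    0 < 1 - 2 * ρ * cos x + ρ ^ 2 := by
  have : ρ * cos x ≤ |ρ| :=
    calc ρ * cos x ≤ |ρ * cos x| := le_abs_self _
      _ = |ρ| * |cos x| := abs_mul _ _
      _ ≤ |ρ| := mul_le_of_le_one_right (abs_nonneg ρ) (abs_cos_le_one x)
  nlinarith [sq_abs ρ]

theorem integral_log_sub_mul_cos {a b : ℝ} (h : |b| < a) :
    ∫ x in (0:ℝ)..2 * π, log (a - b * cos x) =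
      2 * π * log ((a + √(a ^ 2 - b ^ 2)) / 2) := by
  set s := √(a ^ 2 - b ^ 2)
  have hs2 : s ^ 2 = a ^ 2 - b ^ 2 := sq_sqrt (by nlinarith [sq_abs b, abs_nonneg b])
  have hsum : 0 < a + s := by linarith [abs_nonneg b, sqrt_nonneg (a ^ 2 - b ^ 2)]
  set ρ := b / (a + s)
  have hρ : |ρ| < 1 := by
    rw [abs_div, abs_of_pos hsum, div_lt_one hsum]
    linarith [sqrt_nonneg (a ^ 2 - b ^ 2)]
  -- `(a + s) (a - s) = b²`, so `(a + s) / 2 * ρ² = (a - s) / 2`.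
  have hfactor (x : ℝ) : a - b * cos x = (a + s) / 2 * (1 - 2 * ρ * cos x + ρ ^ 2) := by
    simp only [ρ]
    field_simp
    linear_combination -hs2
  have hint : IntervalIntegrable (fun x => log (1 - 2 * ρ * cos x + ρ ^ 2)) volume 0 (2 * π) :=
    (Continuous.log (by fun_prop) fun x =>
      (one_sub_two_mul_cos_add_sq_pos hρ x).ne').intervalIntegrable _ _
  calc ∫ x in (0:ℝ)..2 * π, log (a - b * cos x)
      = ∫ x in (0:ℝ)..2 * π, (log ((a + s) / 2) + log (1 - 2 * ρ * cos x + ρ ^ 2)) :=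
        intervalIntegral.integral_congr fun x _ => by
          rw [hfactor, log_mul (by positivity) (one_sub_two_mul_cos_add_sq_pos hρ x).ne']
    _ = 2 * π * log ((a + s) / 2) := by
        rw [intervalIntegral.integral_add intervalIntegrable_const hint,
          intervalIntegral.integral_const, integral_log_one_sub_two_mul_cos_add_sq hρ.le]
        simp

theorem integral_comp_cos_zero_two_pi {f : ℝ → ℝ} (hf : ContinuousOn f (Set.Icc (-1) 1)) :
    ∫ y in (0:ℝ)..2 * π, f (cos y) = 2 * ∫ y in (0:ℝ)..π, f (cos y) := by
  have hcont : Continuous fun y => f (cos y) :=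
    hf.comp_continuous continuous_cos fun y => ⟨neg_one_le_cos y, cos_le_one y⟩
  have hsymm : ∫ y in π..2 * π, f (cos y) = ∫ y in (0:ℝ)..π, f (cos y) := by
    have := intervalIntegral.integral_comp_sub_left (fun y => f (cos y)) (2 * π)
      (a := 0) (b := π)
    rw [show 2 * π - π = π by ring, sub_zero] at this
    simpa only [cos_two_pi_sub] using this.symm
  rw [← intervalIntegral.integral_add_adjacent_intervals (hcont.intervalIntegrable 0 π)
    (hcont.intervalIntegrable π (2 * π)), hsymm, two_mul]

theorem ae_cos_ne_one : ∀ᵐ y : ℝ, cos y ≠ 1 := by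
  have : {y : ℝ | cos y = 1}.Countable :=
    (Set.countable_range fun n : ℤ => (n : ℝ) * (2 * π)).mono fun y hy =>
      (cos_eq_one_iff y).1 hy
  exact this.ae_notMem volume

theorem double_integral_entropy :
    (1 / (24 * π ^ 2)) *
        ∫ y in (0:ℝ)..(2 * π), ∫ x in (0:ℝ)..(2 * π),
          Real.log (10 - 8 * Real.cos x - 2 * Real.cos y) =
      (1 / (6 * π)) * ∫ x in (0:ℝ)..π,
        Real.log (5 - Real.cos x + Real.sqrt (Real.cos x ^ 2 - 10 * Real.cos x + 9)) := by
  set g : ℝ → ℝ := fun c => log (5 - c + √(c ^ 2 - 10 * c + 9))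
  have hinner {c : ℝ} (hc : c < 1) :
      ∫ x in (0:ℝ)..2 * π, log (10 - 8 * cos x - 2 * c) = 2 * π * g c := by
    have := integral_log_sub_mul_cos (a := 10 - 2 * c) (b := 8) (by rw [abs_of_pos] <;> linarith)
    rw [show (10 - 2 * c) ^ 2 - 8 ^ 2 = 2 ^ 2 * (c ^ 2 - 10 * c + 9) by ring,
      sqrt_mul (by norm_num), sqrt_sq (by norm_num)] at this
    convert this using 3 <;> ring_nf
  have hg : ContinuousOn g (Set.Icc (-1) 1) :=
    ContinuousOn.log (by fun_prop) fun c hc => by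
      nlinarith [hc.2, sqrt_nonneg (c ^ 2 - 10 * c + 9)]
  rw [intervalIntegral.integral_congr_ae (ae_cos_ne_one.mono fun y hy _ =>
      hinner ((cos_le_one y).lt_of_ne hy)),
    intervalIntegral.integral_const_mul, integral_comp_cos_zero_two_pi hg]
  simp only [g]
  field_simp
  ring
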